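/- arXiv:1308.2571 — 4 statements merged into one kernel-verified Lean document; each statement's English description precedes it below -/
import Mathlib

section
/- Let n ≥ 3 and suppose Φ : 𝒦^n → 𝒦^n is a Minkowski valuation which is SL(n) equivariant and homogeneous of degree r. Then Φ K ⊆ span K for every K ∈ 𝒦^n, where span K denotes the linear hull of K. -/
open scoped RealInnerProductSpace Pointwise NNReal
open MeasureTheory

noncomputable section

/-- `ℝⁿ` with its Euclidean structure. -/
abbrev Euc (n : ℕ) := EuclideanSpace ℝ (Fin n)

variable {n : ℕ}

/-- The image of a convex body under a linear map (automatically continuous,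
since we are in finite dimensions). -/
def mapBody (φ : Euc n →ₗ[ℝ] Euc n) (K : ConvexBody (Euc n)) : ConvexBody (Euc n) :=
  ⟨φ '' (K : Set (Euc n)), K.convex.linear_image φ,
    K.isCompact.image φ.continuous_of_finiteDimensional, K.nonempty.image φ⟩

/-- The support function `h(K, x) = max {⟪x, y⟫ : y ∈ K}` of a convex body. -/
def supp (K : ConvexBody (Euc n)) (x : Euc n) : ℝ :=
  sSup ((fun y => ⟪x, y⟫) '' (K : Set (Euc n)))

lemma isCompact_convexHull_insert_zero (K : ConvexBody (Euc n)) :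
    IsCompact (convexHull ℝ (insert (0 : Euc n) (K : Set (Euc n)))) := by
  have h : convexHull ℝ (insert (0 : Euc n) (K : Set (Euc n)))
      = (fun p : ℝ × Euc n => p.1 • p.2) '' (Set.Icc (0 : ℝ) 1 ×ˢ (K : Set (Euc n))) := by
    rw [convexHull_insert K.nonempty, K.convex.convexHull_eq]
    ext y
    constructor
    · intro hy
      rw [mem_convexJoin] at hy
      obtain ⟨a, ha, b, hb, hy⟩ := hy
      rw [Set.mem_singleton_iff] at ha
      subst ha
      rw [segment_eq_image ℝ (0 : Euc n) b] at hy
      obtain ⟨θ, hθ, rfl⟩ := hy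
      exact ⟨(θ, b), Set.mem_prod.mpr ⟨hθ, hb⟩, by simp⟩
    · rintro ⟨⟨θ, z⟩, hmem, rfl⟩
      obtain ⟨hθ, hz⟩ := Set.mem_prod.mp hmem
      rw [mem_convexJoin]
      refine ⟨0, rfl, z, hz, ?_⟩
      rw [segment_eq_image ℝ (0 : Euc n) z]
      exact ⟨θ, hθ, by simp⟩
  rw [h]
  exact (isCompact_Icc.prod K.isCompact).image (continuous_fst.smul continuous_snd)

/-- `K_o`, the convex hull of `K` and the origin. -/
def bodyO (K : ConvexBody (Euc n)) : ConvexBody (Euc n) :=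
  ⟨convexHull ℝ (insert (0 : Euc n) (K : Set (Euc n))), convex_convexHull ℝ _,
    isCompact_convexHull_insert_zero K,
    ⟨0, subset_convexHull ℝ _ (Set.mem_insert 0 _)⟩⟩

/-- The moment vector `m(K) = ∫_K x dx`. -/
def momentVec (K : ConvexBody (Euc n)) : Euc n := ∫ y in (K : Set (Euc n)), y

/-- The support function of the moment body, `h(M K, x) = ∫_K |⟪x, y⟫| dy`. -/
def momentSupp (K : ConvexBody (Euc n)) (x : Euc n) : ℝ :=
  ∫ y in (K : Set (Euc n)), |⟪x, y⟫|

/-- `m_*(K) = ∫_{K_o ∖ K} x dx`. -/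
def momentVecStar (K : ConvexBody (Euc n)) : Euc n :=
  ∫ y in ((bodyO K : Set (Euc n)) \ (K : Set (Euc n))), y

/-- The support function of `M_* K`, `h(M_* K, x) = ∫_{K_o ∖ K} |⟪x, y⟫| dy`. -/
def momentSuppStar (K : ConvexBody (Euc n)) (x : Euc n) : ℝ :=
  ∫ y in ((bodyO K : Set (Euc n)) \ (K : Set (Euc n))), |⟪x, y⟫|

/-- `Φ` is a Minkowski valuation: `Φ K + Φ L = Φ (K ∪ L) + Φ (K ∩ L)` whenever
`K ∪ L` (and hence `K ∩ L`) is a convex body. -/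
def IsMinkowskiValuation (Φ : ConvexBody (Euc n) → ConvexBody (Euc n)) : Prop :=
  ∀ K L M N : ConvexBody (Euc n),
    (M : Set (Euc n)) = (K : Set (Euc n)) ∪ (L : Set (Euc n)) →
    (N : Set (Euc n)) = (K : Set (Euc n)) ∩ (L : Set (Euc n)) →
    Φ K + Φ L = Φ M + Φ N

/-- `Φ` is `GL(n)` equivariant: `Φ(φ K) = |det φ|^q • φ (Φ K)` for some fixed `q ∈ ℝ`. -/
def IsGLEquivariant (Φ : ConvexBody (Euc n) → ConvexBody (Euc n)) : Prop :=
  ∃ q : ℝ, ∀ (φ : Euc n ≃ₗ[ℝ] Euc n) (K : ConvexBody (Euc n)),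
    Φ (mapBody (φ : Euc n →ₗ[ℝ] Euc n) K)
      = |LinearMap.det (φ : Euc n →ₗ[ℝ] Euc n)| ^ (q : ℝ)
          • mapBody (φ : Euc n →ₗ[ℝ] Euc n) (Φ K)

/-- `Φ` is `SL(n)` equivariant: `Φ(φ K) = φ (Φ K)` for all `φ` with `det φ = 1`. -/
def IsSLEquivariant (Φ : ConvexBody (Euc n) → ConvexBody (Euc n)) : Prop :=
  ∀ φ : Euc n ≃ₗ[ℝ] Euc n, LinearMap.det (φ : Euc n →ₗ[ℝ] Euc n) = 1 →
    ∀ K : ConvexBody (Euc n),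
      Φ (mapBody (φ : Euc n →ₗ[ℝ] Euc n) K) = mapBody (φ : Euc n →ₗ[ℝ] Euc n) (Φ K)

/-- `Φ` is (positively) homogeneous of degree `r`. -/
def IsHomogeneousOfDegree (Φ : ConvexBody (Euc n) → ConvexBody (Euc n)) (r : ℝ) : Prop :=
  ∀ c : ℝ, 0 < c → ∀ K : ConvexBody (Euc n), Φ (c • K) = (c ^ r) • Φ K

/-
If `z ∈ Φ K` lies outside `span K`, pick a linear form `f` vanishing on `span K`
with `f z ≠ 0`, and (as `n ≥ 2`) a vector `v ≠ 0` with `f v = 0`. The transvections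
`x ↦ x + f x • c • v` lie in `SL(n)` and fix `K` pointwise, so by equivariance they map `Φ K`
onto itself; hence `Φ K` contains the whole line `z + ℝ • v`, contradicting its compactness.
-/

open Bornology

lemma not_isBounded_of_forall_add_smul_mem {E : Type*} [NormedAddCommGroup E] [NormedSpace ℝ E]
    {S : Set E} {z w : E} (hw : w ≠ 0) (hS : ∀ c : ℝ, z + c • w ∈ S) : ¬IsBounded S := by
  intro hSb
  obtain ⟨R, hR⟩ := hSb.exists_norm_le
  set c := (R + ‖z‖ + 1) / ‖w‖
  have hcw : c * ‖w‖ = R + ‖z‖ + 1 := div_mul_cancel₀ _ (norm_ne_zero_iff.mpr hw)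
  have : c * ‖w‖ ≤ R + ‖z‖ := calc
    c * ‖w‖ ≤ ‖c • w‖ := by
      rw [norm_smul, Real.norm_eq_abs]
      exact mul_le_mul_of_nonneg_right (le_abs_self c) (norm_nonneg w)
    _ = ‖(z + c • w) - z‖ := by rw [add_sub_cancel_left]
    _ ≤ ‖z + c • w‖ + ‖z‖ := norm_sub_le _ _
    _ ≤ R + ‖z‖ := by gcongr; exact hR _ (hS c)
  linarith

lemma mapBody_eq_self_of_forall_apply_eq {φ : Euc n →ₗ[ℝ] Euc n} {K : ConvexBody (Euc n)}
    (hφ : ∀ y ∈ (K : Set (Euc n)), φ y = y) : mapBody φ K = K :=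
  ConvexBody.ext <| Set.image_congr hφ |>.trans (Set.image_id _)

lemma IsSLEquivariant.apply_mem_of_forall_apply_eq {Φ : ConvexBody (Euc n) → ConvexBody (Euc n)}
    (hΦ : IsSLEquivariant Φ) {φ : Euc n ≃ₗ[ℝ] Euc n}
    (hdet : LinearMap.det (φ : Euc n →ₗ[ℝ] Euc n) = 1)
    {K : ConvexBody (Euc n)} (hφK : ∀ y ∈ (K : Set (Euc n)), φ y = y)
    {z : Euc n} (hz : z ∈ (Φ K : Set (Euc n))) : φ z ∈ (Φ K : Set (Euc n)) := by
  have hΦK := hΦ φ hdet K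
  rw [mapBody_eq_self_of_forall_apply_eq hφK] at hΦK
  rw [hΦK]
  exact Set.mem_image_of_mem φ hz

lemma IsSLEquivariant.add_smul_mem_of_span_le_ker {Φ : ConvexBody (Euc n) → ConvexBody (Euc n)}
    (hΦ : IsSLEquivariant Φ) {K : ConvexBody (Euc n)} {f : Module.Dual ℝ (Euc n)}
    (hKf : Submodule.span ℝ (K : Set (Euc n)) ≤ LinearMap.ker f) {v : Euc n} (hfv : f v = 0)
    {z : Euc n} (hz : z ∈ (Φ K : Set (Euc n))) : z + f z • v ∈ (Φ K : Set (Euc n)) := by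
  refine hΦ.apply_mem_of_forall_apply_eq (φ := LinearEquiv.transvection hfv) ?_ ?_ hz
  · rw [← LinearEquiv.coe_det, LinearEquiv.transvection.det_eq_one, Units.val_one]
  · intro y hy
    have hfy : f y = 0 := hKf (Submodule.subset_span hy)
    simp [LinearMap.transvection.apply, hfy]

theorem minkowski_valuation_subset_span_general
    (n : ℕ) (hn : 3 ≤ n) (Φ : ConvexBody (Euc n) → ConvexBody (Euc n))
    (hSL : IsSLEquivariant Φ) :
    ∀ K : ConvexBody (Euc n),
      (Φ K : Set (Euc n)) ⊆ (Submodule.span ℝ (K : Set (Euc n)) : Set (Euc n)) := by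
  intro K z hz
  by_contra hzK
  obtain ⟨f, hfz, hKf⟩ := Submodule.exists_le_ker_of_notMem hzK
  obtain ⟨v, hfv, hv⟩ := (Submodule.ne_bot_iff _).mp <|
    LinearMap.ker_ne_bot_of_finrank_lt (f := f)
      (by simp only [Module.finrank_self, finrank_euclideanSpace, Fintype.card_fin]; omega)
  refine not_isBounded_of_forall_add_smul_mem (z := z) (smul_ne_zero hfz hv) (fun c => ?_)
    (Φ K).isCompact.isBounded
  have hfcv : f (c • v) = 0 := by rw [map_smul, LinearMap.mem_ker.mp hfv, smul_zero]
  simpa only [smul_comm c (f z) v] using hSL.add_smul_mem_of_span_le_ker hKf hfcv hz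

/-- **Lemma 1 (i)**: `Φ K ⊆ span K`. -/
theorem minkowski_valuation_subset_span
    (n : ℕ) (hn : 3 ≤ n) (r : ℝ) (Φ : ConvexBody (Euc n) → ConvexBody (Euc n))
    (hval : IsMinkowskiValuation Φ) (hSL : IsSLEquivariant Φ)
    (hhom : IsHomogeneousOfDegree Φ r) :
    ∀ K : ConvexBody (Euc n),
      (Φ K : Set (Euc n)) ⊆ (Submodule.span ℝ (K : Set (Euc n)) : Set (Euc n)) :=
  minkowski_valuation_subset_span_general n hn Φ hSL
end
end

section
/- Let n ≥ 3 and suppose Φ : 𝒦^n → 𝒦^n is a Minkowski valuation which is SL(n) equivariant and homogeneous of degree r ≠ 1. If K ∈ 𝒦^n satisfies span K ≠ ℝ^n (i.e., the linear hull of K is a proper subspace), then Φ K = {0}. -/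
open scoped RealInnerProductSpace Pointwise NNReal
open MeasureTheory

noncomputable section

variable {n : ℕ}

/-! If `K` lies in a hyperplane `ker f` and `f v = 1`, the linear map that multiplies `ker f`
by `s > 0` and `v` by `s ^ (1 - n)` has determinant one and maps `K` to `s K`. Projecting onto
`ker f` along `v`, `SL(n)` equivariance shows that the projection of `Φ K` gets dilated by `s`,
whereas homogeneity dilates it by `s ^ r`. A compact set with `s A = s ^ r A` and `s ≠ s ^ r`
is `{0}`, so `Φ K` lies on the line `ℝ v`. For `n ≥ 2` the vector `v` can be moved within
`f = 1`, putting `Φ K` on two distinct lines through the origin. -/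

open Module

namespace LinearMap

variable {𝕜 V : Type*} [Field 𝕜] [AddCommGroup V] [Module 𝕜 V]

/-- For `f v = 1`: multiplication by `s` on `ker f` and by `s ^ (1 - finrank 𝕜 V)` on `v`, so that
the determinant is one. -/
def hyperplaneDilation (f : Dual 𝕜 V) (v : V) (s : 𝕜) : V →ₗ[𝕜] V :=
  s • transvection f (((s ^ finrank 𝕜 V)⁻¹ - 1) • v)

def hyperplaneProjection (f : Dual 𝕜 V) (v : V) : V →ₗ[𝕜] V :=
  id - f.smulRight v

variable {f : Dual 𝕜 V} {v x : V} {s : 𝕜}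

theorem hyperplaneProjection_apply : hyperplaneProjection f v x = x - f x • v := rfl

theorem hyperplaneDilation_apply_of_apply_eq_zero (hx : f x = 0) :
    hyperplaneDilation f v s x = s • x := by
  simp [hyperplaneDilation, transvection.apply, hx]

theorem hyperplaneProjection_hyperplaneDilation (hv : f v = 1) :
    hyperplaneProjection f v (hyperplaneDilation f v s x) = s • hyperplaneProjection f v x := by
  simp only [hyperplaneProjection_apply, hyperplaneDilation, smul_apply, transvection.apply,
    map_smul, map_add, hv]
  module

theorem det_hyperplaneDilation [FiniteDimensional 𝕜 V] (hv : f v = 1) (hs : s ≠ 0) :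
    (hyperplaneDilation f v s).det = 1 := by
  rw [hyperplaneDilation, det_smul, transvection.det, map_smul, hv, smul_eq_mul, mul_one,
    add_sub_cancel, mul_inv_cancel₀ (pow_ne_zero _ hs)]

end LinearMap

theorem IsCompact.eq_zero_of_smul_eq {E : Type*} [NormedAddCommGroup E] [NormedSpace ℝ E]
    {A : Set E} (hA : IsCompact A) {a b : ℝ} (ha : 0 ≤ a) (hab : a < b) (h : b • A = a • A)
    {x : E} (hx : x ∈ A) : x = 0 := by
  obtain ⟨x₀, hx₀, hmax⟩ := hA.exists_isMaxOn ⟨x, hx⟩ continuous_norm.continuousOn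
  obtain ⟨z, hz, hbz⟩ : b • x₀ ∈ a • A := h ▸ Set.smul_mem_smul_set hx₀
  have hb : 0 < b := ha.trans_lt hab
  have : b * ‖x₀‖ ≤ a * ‖x₀‖ :=
    calc b * ‖x₀‖ = ‖b • x₀‖ := by rw [norm_smul, Real.norm_of_nonneg hb.le]
      _ = ‖a • z‖ := congrArg norm hbz.symm
      _ = a * ‖z‖ := by rw [norm_smul, Real.norm_of_nonneg ha]
      _ ≤ a * ‖x₀‖ := mul_le_mul_of_nonneg_left (hmax hz) ha
  have hx₀0 : ‖x₀‖ = 0 := le_antisymm (by nlinarith [norm_nonneg x₀]) (norm_nonneg _)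
  exact norm_le_zero_iff.mp (hx₀0 ▸ hmax hx)

theorem mapBody_eq_smul {T : Euc n →ₗ[ℝ] Euc n} {K : ConvexBody (Euc n)} {s : ℝ}
    (hT : ∀ x ∈ (K : Set (Euc n)), T x = s • x) : mapBody T K = s • K := by
  apply SetLike.ext'
  change T '' (K : Set (Euc n)) = ((s • K : ConvexBody (Euc n)) : Set (Euc n))
  rw [ConvexBody.coe_smul, ← Set.image_smul]
  exact Set.image_congr hT

theorem IsSLEquivariant.map_eq {Φ : ConvexBody (Euc n) → ConvexBody (Euc n)}
    (hΦ : IsSLEquivariant Φ) {T : Euc n →ₗ[ℝ] Euc n} (hT : T.det = 1) (K : ConvexBody (Euc n)) :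
    Φ (mapBody T K) = mapBody T (Φ K) := by
  have hunit : IsUnit T.det := hT ▸ isUnit_one
  have := hΦ (T.equivOfIsUnitDet hunit) (by rwa [LinearMap.coe_equivOfIsUnitDet]) K
  rwa [LinearMap.coe_equivOfIsUnitDet] at this

theorem IsSLEquivariant.smul_image_projection_eq {Φ : ConvexBody (Euc n) → ConvexBody (Euc n)}
    {r : ℝ} (hSL : IsSLEquivariant Φ) (hhom : IsHomogeneousOfDegree Φ r) {K : ConvexBody (Euc n)}
    {f : Dual ℝ (Euc n)} (hfK : ∀ x ∈ (K : Set (Euc n)), f x = 0) {v : Euc n} (hv : f v = 1)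
    {s : ℝ} (hs : 0 < s) :
    s • LinearMap.hyperplaneProjection f v '' (Φ K : Set (Euc n))
      = s ^ r • LinearMap.hyperplaneProjection f v '' (Φ K : Set (Euc n)) := by
  set p := LinearMap.hyperplaneProjection f v
  set T := LinearMap.hyperplaneDilation f v s
  have hΦ : s ^ r • Φ K = mapBody T (Φ K) := by
    rw [← hhom s hs, ← mapBody_eq_smul (T := T) fun x hx =>
      LinearMap.hyperplaneDilation_apply_of_apply_eq_zero (hfK x hx),
      hSL.map_eq (LinearMap.det_hyperplaneDilation hv hs.ne')]
  calc s • p '' (Φ K : Set (Euc n))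
      = (fun x => p (T x)) '' (Φ K : Set (Euc n)) := by
        rw [← Set.image_smul, Set.image_image]
        exact Set.image_congr fun x _ =>
          (LinearMap.hyperplaneProjection_hyperplaneDilation hv).symm
    _ = p '' ((s ^ r • Φ K : ConvexBody (Euc n)) : Set (Euc n)) := by
        rw [hΦ, ← Set.image_image]; rfl
    _ = s ^ r • p '' (Φ K : Set (Euc n)) := by
        rw [ConvexBody.coe_smul, image_smul_set]

theorem IsSLEquivariant.eq_smul_of_mem {Φ : ConvexBody (Euc n) → ConvexBody (Euc n)} {r : ℝ}
    (hSL : IsSLEquivariant Φ) (hhom : IsHomogeneousOfDegree Φ r) (hr : r ≠ 1)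
    {K : ConvexBody (Euc n)} {f : Dual ℝ (Euc n)} (hfK : ∀ x ∈ (K : Set (Euc n)), f x = 0)
    {v : Euc n} (hv : f v = 1) {y : Euc n} (hy : y ∈ Φ K) : y = f y • v := by
  have hA := hSL.smul_image_projection_eq hhom hfK hv two_pos
  have hcompact := (Φ K).isCompact.image
    (LinearMap.hyperplaneProjection f v).continuous_of_finiteDimensional
  have h2r : (2 : ℝ) ≠ 2 ^ r := by
    intro h
    nth_rewrite 1 [← Real.rpow_one 2] at h
    exact hr ((Real.rpow_right_inj two_pos (by norm_num)).mp h).symm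
  have hpy : LinearMap.hyperplaneProjection f v y = 0 := by
    rcases h2r.lt_or_gt with h | h
    · exact hcompact.eq_zero_of_smul_eq two_pos.le h hA.symm ⟨y, hy, rfl⟩
    · exact hcompact.eq_zero_of_smul_eq (by positivity) h hA ⟨y, hy, rfl⟩
  rwa [LinearMap.hyperplaneProjection_apply, sub_eq_zero] at hpy

theorem minkowski_valuation_lower_dimensional_trivial_general
    (n : ℕ) (hn : 3 ≤ n) (r : ℝ) (hr : r ≠ 1) (Φ : ConvexBody (Euc n) → ConvexBody (Euc n))
    (hSL : IsSLEquivariant Φ)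
    (hhom : IsHomogeneousOfDegree Φ r) :
    ∀ K : ConvexBody (Euc n), Submodule.span ℝ (K : Set (Euc n)) ≠ ⊤ →
      (Φ K : Set (Euc n)) = {0} := by
  intro K hspan
  obtain ⟨f, hf0, hfspan⟩ :=
    Submodule.exists_dual_map_eq_bot_of_lt_top (lt_top_iff_ne_top.mpr hspan) inferInstance
  have hfK : ∀ x ∈ (K : Set (Euc n)), f x = 0 := fun x hx =>
    LinearMap.le_ker_iff_map.mpr hfspan (Submodule.subset_span hx)
  obtain ⟨v, hv⟩ := LinearMap.surjective_iff_ne_zero.mpr hf0 1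
  have hdim : finrank ℝ ℝ < finrank ℝ (Euc n) := by
    rw [finrank_self, finrank_euclideanSpace_fin]; omega
  obtain ⟨u, hu, hu0⟩ :=
    Submodule.exists_mem_ne_zero_of_ne_bot (LinearMap.ker_ne_bot_of_finrank_lt (f := f) hdim)
  have hvu : f (v + u) = 1 := by rw [map_add, hv, LinearMap.mem_ker.mp hu, add_zero]
  refine Set.eq_singleton_iff_nonempty_unique_mem.mpr ⟨(Φ K).nonempty, fun y hy => ?_⟩
  have h₁ := hSL.eq_smul_of_mem hhom hr hfK hv hy
  have h₂ := hSL.eq_smul_of_mem hhom hr hfK hvu hy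
  have hfy : f y = 0 := by
    rw [smul_add, ← h₁, left_eq_add, smul_eq_zero] at h₂
    exact h₂.resolve_right hu0
  rw [h₁, hfy, zero_smul]

/-- **Lemma 1 (ii)**: if `r ≠ 1` and `span K ≠ ℝⁿ` then `Φ K = {0}`. -/
theorem minkowski_valuation_lower_dimensional_trivial
    (n : ℕ) (hn : 3 ≤ n) (r : ℝ) (hr : r ≠ 1) (Φ : ConvexBody (Euc n) → ConvexBody (Euc n))
    (hval : IsMinkowskiValuation Φ) (hSL : IsSLEquivariant Φ)
    (hhom : IsHomogeneousOfDegree Φ r) :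
    ∀ K : ConvexBody (Euc n), Submodule.span ℝ (K : Set (Euc n)) ≠ ⊤ →
      (Φ K : Set (Euc n)) = {0} :=
  minkowski_valuation_lower_dimensional_trivial_general n hn r hr Φ hSL hhom

end
end

section
/- Let n ≥ 3 and suppose Φ : 𝒦^n → 𝒦^n is an SL(n) equivariant continuous Minkowski valuation which is homogeneous of degree 1. Then for every K ∈ 𝒦^n and every unit vector u ∈ S^{n−1}, h(Φ K, u) = h(Φ(π_u K), u), where π_u denotes the orthogonal projection of ℝ^n onto the line span{u}. -/
/-! Stretching `u^⊥` by a factor `s > 0` while fixing `u` is a positive multiple of a map of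
determinant one, so a `1`-homogeneous `SL(n)` equivariant `Φ` commutes with it; and such a stretch
does not change the support function in direction `u`. Hence `h(Φ (S_s K), u) = h(Φ K, u)` for
every `s > 0`, and since `S_s K → π_u K` as `s → 0`, continuity of `Φ` gives the claim. -/

open scoped RealInnerProductSpace Pointwise NNReal
open MeasureTheory

noncomputable section

variable {n : ℕ}

/-- The orthogonal projection onto the line spanned by the unit vector `u`,
`π_u x = ⟪x, u⟫ • u`, as a linear map. -/
def projLine (u : Euc n) : Euc n →ₗ[ℝ] Euc n where
  toFun x := ⟪x, u⟫ • u
  map_add' x y := by simp [inner_add_left, add_smul]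
  map_smul' c x := by simp only [RingHom.id_apply, real_inner_smul_left, mul_smul]

open Filter Topology

@[simp] lemma projLine_apply (u x : Euc n) : projLine u x = ⟪x, u⟫ • u := rfl

lemma ne_zero_of_norm_eq_one {u : Euc n} (hu : ‖u‖ = 1) : n ≠ 0 := by
  rintro rfl
  simp [Subsingleton.elim u 0] at hu

lemma det_id_add_smul_projLine {u : Euc n} (hu : ‖u‖ = 1) (c : ℝ) :
    LinearMap.det (LinearMap.id + c • projLine u) = 1 + c := by
  set b := (EuclideanSpace.basisFun (Fin n) ℝ).toBasis
  have hmat : LinearMap.toMatrix b b (LinearMap.id + c • projLine u)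
      = 1 + Matrix.replicateCol Unit (c • ⇑u) * Matrix.replicateRow Unit ⇑u := by
    ext i j
    simp [b, LinearMap.toMatrix_apply, Matrix.one_apply, Matrix.mul_apply,
      EuclideanSpace.inner_single_left, mul_comm]
  have hdot : (⇑u ⬝ᵥ c • ⇑u) = c := by
    have huu := EuclideanSpace.inner_eq_star_dotProduct u u
    simp only [star_trivial, real_inner_self_eq_norm_sq, hu] at huu
    rw [dotProduct_smul, ← huu]
    simp
  rw [← LinearMap.det_toMatrix b, hmat, Matrix.det_one_add_replicateCol_mul_replicateRow, hdot]

def stretch (u : Euc n) (s : ℝ) : Euc n →ₗ[ℝ] Euc n :=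
  projLine u + s • (LinearMap.id - projLine u)

lemma stretch_eq_smul {u : Euc n} {s : ℝ} (hs : s ≠ 0) :
    stretch u s = s • (LinearMap.id + (s⁻¹ - 1) • projLine u) := by
  rw [stretch, smul_add, smul_smul, mul_sub, mul_inv_cancel₀ hs, smul_sub, sub_smul, one_smul,
    mul_one]
  abel

lemma det_stretch {u : Euc n} (hu : ‖u‖ = 1) {s : ℝ} (hs : s ≠ 0) :
    LinearMap.det (stretch u s) = s ^ (n - 1) := by
  rw [stretch_eq_smul hs, LinearMap.det_smul, det_id_add_smul_projLine hu,
    finrank_euclideanSpace_fin, add_sub_cancel,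
    pow_sub₀ _ hs (Nat.one_le_iff_ne_zero.2 (ne_zero_of_norm_eq_one hu)), pow_one]

lemma inner_stretch {u : Euc n} (hu : ‖u‖ = 1) (s : ℝ) (y : Euc n) :
    ⟪u, stretch u s y⟫ = ⟪u, y⟫ := by
  have huu : ⟪u, u⟫ = 1 := by simp [hu]
  simp only [stretch, LinearMap.add_apply, LinearMap.smul_apply, LinearMap.sub_apply,
    LinearMap.id_apply, projLine_apply, inner_add_right, inner_sub_right,
    real_inner_smul_right, huu, real_inner_comm u y]
  ring

lemma mapBody_smul (c : ℝ) (f : Euc n →ₗ[ℝ] Euc n) (K : ConvexBody (Euc n)) :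
    mapBody (c • f) K = c • mapBody f K := by
  ext1
  simp only [mapBody, ConvexBody.coe_mk, ConvexBody.coe_smul, ← Set.image_smul, Set.image_image]
  rfl

lemma IsSLEquivariant.apply_mapBody_of_det_pos {Φ : ConvexBody (Euc n) → ConvexBody (Euc n)}
    (hSL : IsSLEquivariant Φ) (hhom : IsHomogeneousOfDegree Φ 1) (hn : n ≠ 0)
    {f : Euc n →ₗ[ℝ] Euc n} (hf : 0 < LinearMap.det f) (K : ConvexBody (Euc n)) :
    Φ (mapBody f K) = mapBody f (Φ K) := by
  set c := LinearMap.det f ^ (n⁻¹ : ℝ)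
  have hc : 0 < c := by positivity
  obtain ⟨g, hfg, hdet⟩ : ∃ g, f = c • g ∧ LinearMap.det g = 1 := by
    refine ⟨c⁻¹ • f, by rw [smul_smul, mul_inv_cancel₀ hc.ne', one_smul], ?_⟩
    rw [LinearMap.det_smul, finrank_euclideanSpace_fin, inv_pow,
      Real.rpow_inv_natCast_pow hf.le hn, inv_mul_cancel₀ hf.ne']
  rw [hfg]
  simp only [mapBody_smul, hhom c hc, Real.rpow_one]
  exact congrArg (c • ·) (hSL (g.equivOfDetNeZero (by simp [hdet])) hdet K)

lemma supp_mapBody_of_inner_eq {f : Euc n →ₗ[ℝ] Euc n} {x x' : Euc n}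
    (h : ∀ y, ⟪x, f y⟫ = ⟪x', y⟫) (K : ConvexBody (Euc n)) :
    supp (mapBody f K) x = supp K x' := by
  simp only [supp, mapBody, ConvexBody.coe_mk, Set.image_image, h]

lemma supp_mapBody_stretch {u : Euc n} (hu : ‖u‖ = 1) (s : ℝ) (K : ConvexBody (Euc n)) :
    supp (mapBody (stretch u s) K) u = supp K u :=
  supp_mapBody_of_inner_eq (inner_stretch hu s) K

lemma inner_le_supp (K : ConvexBody (Euc n)) (x : Euc n) {y : Euc n} (hy : y ∈ K) :
    ⟪x, y⟫ ≤ supp K x :=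
  le_csSup (K.isCompact.image (continuous_const.inner continuous_id)).bddAbove ⟨y, hy, rfl⟩

lemma supp_le (K : ConvexBody (Euc n)) (x : Euc n) {c : ℝ} (h : ∀ y ∈ K, ⟪x, y⟫ ≤ c) :
    supp K x ≤ c :=
  csSup_le (K.nonempty.image _) (by rintro _ ⟨y, hy, rfl⟩; exact h y hy)

lemma supp_le_supp_add_dist (K L : ConvexBody (Euc n)) (x : Euc n) :
    supp K x ≤ supp L x + ‖x‖ * dist K L := by
  refine supp_le K x fun y hy => ?_
  obtain ⟨z, hz, hyz⟩ := L.isCompact.exists_infDist_eq_dist L.nonempty y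
  have hdist : dist y z ≤ dist K L :=
    hyz ▸ Metric.infDist_le_hausdorffDist_of_mem hy ConvexBody.hausdorffEDist_ne_top
  calc ⟪x, y⟫ = ⟪x, z⟫ + ⟪x, y - z⟫ := by rw [inner_sub_right]; ring
    _ ≤ supp L x + ‖x‖ * ‖y - z‖ :=
      add_le_add (inner_le_supp L x hz) (real_inner_le_norm x _)
    _ ≤ supp L x + ‖x‖ * dist K L := by
      rw [← dist_eq_norm]; gcongr

lemma lipschitzWith_supp (x : Euc n) :
    LipschitzWith ‖x‖₊ (fun K : ConvexBody (Euc n) => supp K x) := by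
  refine LipschitzWith.of_dist_le_mul fun K L => ?_
  have hKL := supp_le_supp_add_dist K L x
  have hLK := supp_le_supp_add_dist L K x
  rw [dist_comm] at hLK
  rw [Real.dist_eq, abs_sub_le_iff, coe_nnnorm]
  constructor <;> linarith

lemma dist_mapBody_le {f g : Euc n →ₗ[ℝ] Euc n} {K : ConvexBody (Euc n)} {r : ℝ}
    (hr : 0 ≤ r) (h : ∀ y ∈ K, ‖f y - g y‖ ≤ r) :
    dist (mapBody f K) (mapBody g K) ≤ r := by
  refine Metric.hausdorffDist_le_of_mem_dist hr ?_ ?_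
  · rintro _ ⟨y, hy, rfl⟩
    exact ⟨g y, ⟨y, hy, rfl⟩, by rw [dist_eq_norm]; exact h y hy⟩
  · rintro _ ⟨y, hy, rfl⟩
    exact ⟨f y, ⟨y, hy, rfl⟩, by rw [dist_eq_norm']; exact h y hy⟩

lemma tendsto_mapBody_add_smul (f g : Euc n →ₗ[ℝ] Euc n) (K : ConvexBody (Euc n)) :
    Tendsto (fun s : ℝ => mapBody (f + s • g) K) (𝓝 0) (𝓝 (mapBody f K)) := by
  obtain ⟨R, hR0, hR⟩ :=
    (K.isCompact.image g.continuous_of_finiteDimensional).isBounded.exists_pos_norm_le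
  rw [tendsto_iff_dist_tendsto_zero]
  refine squeeze_zero (fun _ => dist_nonneg)
    (fun s => dist_mapBody_le (r := |s| * R) (by positivity) fun y hy => ?_) ?_
  · rw [LinearMap.add_apply, add_sub_cancel_left, LinearMap.smul_apply, norm_smul,
      Real.norm_eq_abs]
    exact mul_le_mul_of_nonneg_left (hR _ ⟨y, hy, rfl⟩) (abs_nonneg s)
  · exact (continuous_abs.mul continuous_const).tendsto' (0 : ℝ) 0 (by simp)

lemma tendsto_mapBody_stretch (u : Euc n) (K : ConvexBody (Euc n)) :
    Tendsto (fun s => mapBody (stretch u s) K) (𝓝 0) (𝓝 (mapBody (projLine u) K)) :=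
  tendsto_mapBody_add_smul _ _ K

theorem supp_eq_supp_projection_general
    (n : ℕ) (Φ : ConvexBody (Euc n) → ConvexBody (Euc n))
    (hcont : Continuous Φ) (hSL : IsSLEquivariant Φ)
    (hhom : IsHomogeneousOfDegree Φ 1) :
    ∀ (K : ConvexBody (Euc n)) (u : Euc n), ‖u‖ = 1 →
      supp (Φ K) u = supp (Φ (mapBody (projLine u) K)) u := by
  intro K u hu
  have hstretch : ∀ s > 0, supp (Φ (mapBody (stretch u s) K)) u = supp (Φ K) u := fun s hs => by
    have hdet : 0 < LinearMap.det (stretch u s) := by rw [det_stretch hu hs.ne']; positivity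
    rw [hSL.apply_mapBody_of_det_pos hhom (ne_zero_of_norm_eq_one hu) hdet,
      supp_mapBody_stretch hu]
  have hlim : Tendsto (fun s => supp (Φ (mapBody (stretch u s) K)) u) (𝓝[>] 0)
      (𝓝 (supp (Φ (mapBody (projLine u) K)) u)) :=
    (lipschitzWith_supp u).continuous.tendsto _ |>.comp <| hcont.tendsto _ |>.comp <|
      (tendsto_mapBody_stretch u K).mono_left nhdsWithin_le_nhds
  refine tendsto_nhds_unique (tendsto_const_nhds.congr' ?_) hlim
  filter_upwards [self_mem_nhdsWithin] with s hs using (hstretch s hs).symm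

/-- Equation (9): a `1`-homogeneous `SL(n)` equivariant continuous Minkowski valuation
is determined by its values on bodies contained in lines through the origin:
`h(Φ K, u) = h(Φ (π_u K), u)`. -/
theorem supp_eq_supp_projection
    (n : ℕ) (hn : 3 ≤ n) (Φ : ConvexBody (Euc n) → ConvexBody (Euc n))
    (hcont : Continuous Φ) (hval : IsMinkowskiValuation Φ) (hSL : IsSLEquivariant Φ)
    (hhom : IsHomogeneousOfDegree Φ 1) :
    ∀ (K : ConvexBody (Euc n)) (u : Euc n), ‖u‖ = 1 →
      supp (Φ K) u = supp (Φ (mapBody (projLine u) K)) u :=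
  supp_eq_supp_projection_general n Φ hcont hSL hhom

end
end

section
/- Let n ≥ 3. There do not exist constants a₁, a₂ ∈ ℝ and a₃, a₄ ≥ 0 such that M_* K = a₁ m(K) + a₂ m(K_o) + a₃ M K + a₄ M(K_o) for every K ∈ 𝒦^n. In particular, if a₁ m(K) + a₂ m(K_o) + a₃ M K + a₄ M(K_o) = {0} for every convex body K containing the origin, with a₃, a₄ ≥ 0, then a₃ = a₄ = 0. -/
open scoped RealInnerProductSpace Pointwise NNReal
open MeasureTheory

noncomputable section

variable {n : ℕ}

/-! The moment terms `⟪x, m K⟫` and `⟪x, m K_o⟫` are odd in `x`, while `h(M K, x)`,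
`h(M K_o, x)` and `h(M_* K, x)` are even, so adding the values at `x` and `-x` isolates the
coefficients `a₃, a₄`. On a body containing the origin `M_* K = {0}` and `K_o = K`, and
`h(M K, x) > 0` as soon as `K` has interior, which forces `a₃ + a₄ = 0`. The putative identity
then says `h(M_* K, ·) = 0` for every `K`, which fails for a ball `K = B(c, 1)` with `‖c‖ > 3`:
`K_o ∖ K` contains the ball `B(c/2, 1/2)`. -/

open Metric

section InnerProductSpace

variable {E : Type*} [NormedAddCommGroup E] [InnerProductSpace ℝ E] [FiniteDimensional ℝ E]
  [MeasurableSpace E] [BorelSpace E] (μ : Measure E) [μ.IsAddHaarMeasure]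

theorem measure_inner_eq_zero {x : E} (hx : x ≠ 0) : μ {y | ⟪x, y⟫ = 0} = 0 := by
  have hker : LinearMap.ker (innerₛₗ ℝ x) ≠ ⊤ := by
    intro h
    have hxx : x ∈ LinearMap.ker (innerₛₗ ℝ x) := h ▸ Submodule.mem_top
    exact hx (inner_self_eq_zero.mp hxx)
  exact Measure.addHaar_submodule μ _ hker

theorem setIntegral_abs_inner_pos {x : E} (hx : x ≠ 0) {s : Set E}
    (hs : IntegrableOn (fun y => |⟪x, y⟫|) s μ) (hμs : μ s ≠ 0) :
    0 < ∫ y in s, |⟪x, y⟫| ∂μ := by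
  rw [setIntegral_pos_iff_support_of_nonneg_ae (ae_of_all _ fun y => abs_nonneg _) hs]
  have hsupp : Function.support (fun y => |⟪x, y⟫|) = {y | ⟪x, y⟫ = 0}ᶜ := by
    ext y; simp
  have hcover :
      s ⊆ (Function.support (fun y => |⟪x, y⟫|) ∩ s) ∪ {y | ⟪x, y⟫ = 0} := by
    intro y hy
    by_cases h : ⟪x, y⟫ = 0
    · exact Or.inr h
    · exact Or.inl ⟨by simpa [hsupp] using h, hy⟩
  refine pos_iff_ne_zero.mpr fun h => hμs (measure_mono_null hcover ?_)
  exact measure_union_null h (measure_inner_eq_zero μ hx)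

end InnerProductSpace

def closedBallBody (c : Euc n) {r : ℝ} (hr : 0 ≤ r) : ConvexBody (Euc n) :=
  ⟨closedBall c r, convex_closedBall c r, isCompact_closedBall c r, nonempty_closedBall.mpr hr⟩

@[simp]
theorem coe_closedBallBody (c : Euc n) {r : ℝ} (hr : 0 ≤ r) :
    (closedBallBody c hr : Set (Euc n)) = closedBall c r :=
  rfl

theorem bodyO_eq_self {K : ConvexBody (Euc n)} (h : (0 : Euc n) ∈ K) : bodyO K = K := by
  apply SetLike.coe_injective
  change convexHull ℝ (insert 0 (K : Set (Euc n))) = K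
  rw [Set.insert_eq_self.mpr h, K.convex.convexHull_eq]

theorem smul_mem_bodyO {K : ConvexBody (Euc n)} {y : Euc n} (hy : y ∈ K) {t : ℝ}
    (ht : t ∈ Set.Icc (0 : ℝ) 1) : t • y ∈ bodyO K :=
  (bodyO K).convex.smul_mem_of_zero_mem (subset_convexHull ℝ _ (Set.mem_insert 0 _))
    (subset_convexHull ℝ _ (Set.mem_insert_of_mem 0 hy)) ht

theorem momentSupp_neg (K : ConvexBody (Euc n)) (x : Euc n) :
    momentSupp K (-x) = momentSupp K x := by
  simp only [momentSupp, inner_neg_left, abs_neg]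

theorem momentSuppStar_neg (K : ConvexBody (Euc n)) (x : Euc n) :
    momentSuppStar K (-x) = momentSuppStar K x := by
  simp only [momentSuppStar, inner_neg_left, abs_neg]

theorem integrableOn_abs_inner (K : ConvexBody (Euc n)) (x : Euc n) :
    IntegrableOn (fun y => |⟪x, y⟫|) K :=
  (continuous_const.inner continuous_id).abs.continuousOn.integrableOn_compact K.isCompact

theorem momentSupp_pos {K : ConvexBody (Euc n)} (hK : volume (K : Set (Euc n)) ≠ 0)
    {x : Euc n} (hx : x ≠ 0) : 0 < momentSupp K x :=
  setIntegral_abs_inner_pos volume hx (integrableOn_abs_inner K x) hK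

theorem momentSuppStar_pos {K : ConvexBody (Euc n)}
    (hK : volume ((bodyO K : Set (Euc n)) \ K) ≠ 0) {x : Euc n} (hx : x ≠ 0) :
    0 < momentSuppStar K x :=
  setIntegral_abs_inner_pos volume hx ((integrableOn_abs_inner _ x).mono_set Set.sdiff_subset) hK

theorem momentSuppStar_eq_zero {K : ConvexBody (Euc n)} (h : (0 : Euc n) ∈ K) (x : Euc n) :
    momentSuppStar K x = 0 := by
  rw [momentSuppStar, bodyO_eq_self h, Set.sdiff_self, Measure.restrict_empty,
    integral_zero_measure]

theorem ball_subset_bodyO_closedBallBody_diff {c : Euc n} {r : ℝ} (hr : 0 ≤ r)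
    (hc : 3 * r < ‖c‖) :
    ball ((1 / 2 : ℝ) • c) (r / 2) ⊆
      (bodyO (closedBallBody c hr) : Set (Euc n)) \ closedBall c r := by
  intro y hy
  rw [mem_ball, dist_eq_norm] at hy
  refine ⟨?_, fun hyc => ?_⟩
  · have h2y : (2 : ℝ) • y ∈ closedBallBody c hr := by
      rw [← SetLike.mem_coe, coe_closedBallBody, mem_closedBall, dist_eq_norm,
        show (2 : ℝ) • y - c = (2 : ℝ) • (y - (1 / 2 : ℝ) • c) by module,
        norm_smul_of_nonneg zero_le_two]
      linarith
    simpa [smul_smul] using smul_mem_bodyO h2y (t := 1 / 2) ⟨by norm_num, by norm_num⟩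
  · rw [mem_closedBall, dist_eq_norm] at hyc
    have htri : ‖(1 / 2 : ℝ) • c‖ ≤ ‖y - (1 / 2 : ℝ) • c‖ + ‖y - c‖ :=
      calc ‖(1 / 2 : ℝ) • c‖ = ‖(y - (1 / 2 : ℝ) • c) - (y - c)‖ := by
            congr 1; module
        _ ≤ _ := norm_sub_le _ _
    rw [norm_smul_of_nonneg (by norm_num)] at htri
    linarith

theorem volume_bodyO_closedBallBody_diff_ne_zero {c : Euc n} {r : ℝ} (hr : 0 < r)
    (hc : 3 * r < ‖c‖) :
    volume ((bodyO (closedBallBody c hr.le) : Set (Euc n)) \ closedBallBody c hr.le) ≠ 0 :=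
  ((measure_ball_pos volume _ (half_pos hr)).trans_le
    (measure_mono (ball_subset_bodyO_closedBallBody_diff hr.le hc))).ne'

def momentCombination (a₁ a₂ a₃ a₄ : ℝ) (K : ConvexBody (Euc n)) (x : Euc n) : ℝ :=
  a₁ * ⟪x, momentVec K⟫ + a₂ * ⟪x, momentVec (bodyO K)⟫
    + a₃ * momentSupp K x + a₄ * momentSupp (bodyO K) x

theorem momentCombination_add_neg (a₁ a₂ a₃ a₄ : ℝ) (K : ConvexBody (Euc n)) (x : Euc n) :
    momentCombination a₁ a₂ a₃ a₄ K x + momentCombination a₁ a₂ a₃ a₄ K (-x)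
      = 2 * (a₃ * momentSupp K x + a₄ * momentSupp (bodyO K) x) := by
  simp only [momentCombination, inner_neg_left, momentSupp_neg]
  ring

theorem eq_zero_of_momentCombination_eq_zero [NeZero n] {a₁ a₂ a₃ a₄ : ℝ}
    (h₃ : 0 ≤ a₃) (h₄ : 0 ≤ a₄)
    (H : ∀ K : ConvexBody (Euc n), (0 : Euc n) ∈ K →
      ∀ x, momentCombination a₁ a₂ a₃ a₄ K x = 0) :
    a₃ = 0 ∧ a₄ = 0 := by
  obtain ⟨e, he⟩ := exists_ne (0 : Euc n)
  let B := closedBallBody (0 : Euc n) zero_le_one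
  have h0B : (0 : Euc n) ∈ B := mem_closedBall_self zero_le_one
  have hpos : 0 < momentSupp B e :=
    momentSupp_pos (measure_closedBall_pos volume 0 one_pos).ne' he
  have hsum := momentCombination_add_neg a₁ a₂ a₃ a₄ B e
  rw [H B h0B, H B h0B, bodyO_eq_self h0B] at hsum
  have hfactor : (a₃ + a₄) * momentSupp B e = 0 := by linarith
  have ha : a₃ + a₄ = 0 := (mul_eq_zero.mp hfactor).resolve_right hpos.ne'
  constructor <;> linarith

theorem momentSuppStar_ne_momentCombination [NeZero n] {a₁ a₂ a₃ a₄ : ℝ}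
    (h₃ : 0 ≤ a₃) (h₄ : 0 ≤ a₄) :
    ¬ ∀ (K : ConvexBody (Euc n)) x, momentSuppStar K x = momentCombination a₁ a₂ a₃ a₄ K x := by
  intro H
  obtain ⟨rfl, rfl⟩ := eq_zero_of_momentCombination_eq_zero h₃ h₄ fun K hK x =>
    (H K x).symm.trans (momentSuppStar_eq_zero hK x)
  obtain ⟨c, hc⟩ := exists_norm_eq (Euc n) zero_le_four
  have hc0 : c ≠ 0 := norm_ne_zero_iff.mp (by norm_num [hc])
  have hpos := momentSuppStar_pos
    (volume_bodyO_closedBallBody_diff_ne_zero one_pos (by norm_num [hc] : 3 * 1 < ‖c‖)) hc0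
  have hsum := momentCombination_add_neg a₁ a₂ 0 0 (closedBallBody c zero_le_one) c
  rw [← H, ← H, momentSuppStar_neg] at hsum
  linarith

/-- `M_*` cannot be written as a linear combination of `m`, `m ∘ (·)_o`, `M` and
`M ∘ (·)_o`; in particular, if such a combination vanishes on all bodies containing the
origin then `a₃ = a₄ = 0`. -/
theorem Mstar_not_combination
    (n : ℕ) (hn : 3 ≤ n) :
    (¬ ∃ a₁ a₂ a₃ a₄ : ℝ, 0 ≤ a₃ ∧ 0 ≤ a₄ ∧
      ∀ (K : ConvexBody (Euc n)) (x : Euc n),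
        momentSuppStar K x = a₁ * ⟪x, momentVec K⟫ + a₂ * ⟪x, momentVec (bodyO K)⟫
          + a₃ * momentSupp K x + a₄ * momentSupp (bodyO K) x) ∧
    (∀ a₁ a₂ a₃ a₄ : ℝ, 0 ≤ a₃ → 0 ≤ a₄ →
      (∀ K : ConvexBody (Euc n), (0 : Euc n) ∈ (K : Set (Euc n)) → ∀ x : Euc n,
        a₁ * ⟪x, momentVec K⟫ + a₂ * ⟪x, momentVec (bodyO K)⟫
          + a₃ * momentSupp K x + a₄ * momentSupp (bodyO K) x = 0) →
      a₃ = 0 ∧ a₄ = 0) := by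
  have : NeZero n := ⟨by omega⟩
  exact ⟨fun ⟨_, _, _, _, h₃, h₄, H⟩ => momentSuppStar_ne_momentCombination h₃ h₄ H,
    fun _ _ _ _ h₃ h₄ H => eq_zero_of_momentCombination_eq_zero h₃ h₄ H⟩

end
end
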